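/- Let k ∈ ℤ_{>0}, let a₁, …, a_{3k} be positive integers, let T = (Σ_{i=1}^{3k} a_i)/k be an integer, and suppose T/4 < a_i < T/2 for every i ∈ [3k]. Set Φ = Σ_{i=1}^{3k} a_i, and let f : T_Φ → ℝ be the assignment valuation represented by ([k], w', φ'), where w'(i,1) = w'(i,2) = i for every i ∈ [k] and φ'(i) = T for every i ∈ [k]. Define φ : [3k] → ℤ_{>0} by φ(i) = a_i. Then there exists a weight function w : [3k] × {1,2} → ℝ such that the assignment valuation represented by ([3k], w, φ) equals f if and only if the multiset {a₁, …, a_{3k}} can be partitioned into k disjoint triplets A₁, …, A_k with Σ_{a∈A_i} a = T for every i ∈ [k]. -/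

import Mathlib

open Finset

/-- Embedding of `ℤ²` into `ℝ²`. -/
def toR (x : Fin 2 → ℤ) : Fin 2 → ℝ := fun j => (x j : ℝ)

/-- `chi none = χ₀` is the zero vector, `chi (some i) = χ_i` is the `i`-th unit vector. -/
def chi : Option (Fin 2) → (Fin 2 → ℤ)
  | none => 0
  | some i => Pi.single i 1

/-- A set `S ⊆ ℤ²` is M♮-convex if for all `x, y ∈ S` and every index `i` with `x^i > y^i`
there exists `j` with `x^j < y^j` or `j = 0` such that `x − χ_i + χ_j ∈ S` and
`y + χ_i − χ_j ∈ S`. -/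
def MnConvexSet (S : Set (Fin 2 → ℤ)) : Prop :=
  ∀ x ∈ S, ∀ y ∈ S, ∀ i : Fin 2, y i < x i →
    ∃ j : Option (Fin 2), (∀ j', j = some j' → x j' < y j') ∧
      x - Pi.single i 1 + chi j ∈ S ∧ y + Pi.single i 1 - chi j ∈ S

/-- `T_Φ = { x ∈ ℤ²_{≥0} : x¹ + x² ≤ Φ }`. -/
def TPhi (Φ : ℤ) : Set (Fin 2 → ℤ) := {x | 0 ≤ x 0 ∧ 0 ≤ x 1 ∧ x 0 + x 1 ≤ Φ}

/-- M♮-concavity of a function on `T_Φ` (exchange property of its extension by `−∞`). -/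
def MnConcaveOn (Φ : ℤ) (f : (Fin 2 → ℤ) → ℝ) : Prop :=
  ∀ x ∈ TPhi Φ, ∀ y ∈ TPhi Φ, ∀ i : Fin 2, y i < x i →
    ∃ j : Option (Fin 2), (∀ j', j = some j' → x j' < y j') ∧
      x - Pi.single i 1 + chi j ∈ TPhi Φ ∧ y + Pi.single i 1 - chi j ∈ TPhi Φ ∧
      f x + f y ≤ f (x - Pi.single i 1 + chi j) + f (y + Pi.single i 1 - chi j)

noncomputable def lam1 (S : Set (Fin 2 → ℤ)) : ℤ := sInf ((fun x => x 0) '' S)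
noncomputable def mu1 (S : Set (Fin 2 → ℤ)) : ℤ := sSup ((fun x => x 0) '' S)
noncomputable def lam2 (S : Set (Fin 2 → ℤ)) : ℤ := sInf ((fun x => x 1) '' S)
noncomputable def mu2 (S : Set (Fin 2 → ℤ)) : ℤ := sSup ((fun x => x 1) '' S)
noncomputable def lam0 (S : Set (Fin 2 → ℤ)) : ℤ := sInf ((fun x => x 0 + x 1) '' S)
noncomputable def mu0 (S : Set (Fin 2 → ℤ)) : ℤ := sSup ((fun x => x 0 + x 1) '' S)

/-- Boundedness of a subset of `ℤ²`. -/
def BoundedSet (S : Set (Fin 2 → ℤ)) : Prop := ∃ M : ℤ, ∀ x ∈ S, |x 0| ≤ M ∧ |x 1| ≤ M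

/-- The quantity `ℓ_LH(S) − ℓ_UH(S) = (μ₁ − (λ₀ − λ₂)) − ((μ₀ − μ₂) − λ₁)`;
`S` is of positive-type if it is `> 0`, of zero-type if it equals `0`, and of
negative-type if it is `< 0`. -/
noncomputable def typeQ (S : Set (Fin 2 → ℤ)) : ℤ :=
  (mu1 S - (lam0 S - lam2 S)) - ((mu0 S - mu2 S) - lam1 S)

/-- `⟨p,x⟩ = p¹x¹ + p²x²`. -/
def inner2 (p : Fin 2 → ℝ) (x : Fin 2 → ℤ) : ℝ := p 0 * x 0 + p 1 * x 1

/-- The maximizer set `D_f(p)`. -/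
def maximizerSet (Φ : ℤ) (f : (Fin 2 → ℤ) → ℝ) (p : Fin 2 → ℝ) : Set (Fin 2 → ℤ) :=
  {x | x ∈ TPhi Φ ∧ ∀ y ∈ TPhi Φ, f y - inner2 p y ≤ f x - inner2 p x}

/-- A subset of `ℤ²` is two-dimensional if it is not contained in any affine line of `ℝ²`. -/
def TwoDimensional (S : Set (Fin 2 → ℤ)) : Prop :=
  ¬ ∃ a b c : ℝ, (a ≠ 0 ∨ b ≠ 0) ∧ ∀ x ∈ S, a * (x 0 : ℝ) + b * (x 1 : ℝ) = c

/-- Feasible assignments `y` for demand vector `x` and supplies `φ`. -/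
def FeasibleAssign {V : Type} [Fintype V] (φ : V → ℤ) (x : Fin 2 → ℤ)
    (y : V → Fin 2 → ℤ) : Prop :=
  (∀ i j, 0 ≤ y i j) ∧ (∀ j, ∑ i, y i j = x j) ∧ (∀ i, y i 0 + y i 1 ≤ φ i)

/-- `f` is the assignment valuation represented by `(V, w, φ)`. -/
def IsAssignmentValuation (Φ : ℤ) (f : (Fin 2 → ℤ) → ℝ) (V : Type) [Fintype V]
    (w : V → Fin 2 → ℝ) (φ : V → ℤ) : Prop :=
  (∀ i, 0 < φ i) ∧ (∑ i, φ i = Φ) ∧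
  ∀ x ∈ TPhi Φ, IsGreatest
    {s : ℝ | ∃ y : V → Fin 2 → ℤ, FeasibleAssign φ x y ∧
       s = ∑ i, (w i 0 * (y i 0 : ℝ) + w i 1 * (y i 1 : ℝ))} (f x)

/-- A hexagonalization of `T_Φ`: nonempty M♮-convex sets covering `T_Φ` whose convex hulls
have pairwise disjoint interiors. -/
def IsHexagonalization (Φ : ℤ) {q : ℕ} (H : Fin q → Set (Fin 2 → ℤ)) : Prop :=
  (∀ i, (H i).Nonempty) ∧ (∀ i, MnConvexSet (H i)) ∧ (⋃ i, H i) = TPhi Φ ∧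
  ∀ i j : Fin q, i ≠ j →
    interior (convexHull ℝ (toR '' H i)) ∩ interior (convexHull ℝ (toR '' H j)) = ∅

/-- A feasible hexagonalization: every member is of positive- or zero-type, and at least one
member is of positive-type. -/
def IsFeasibleHex (Φ : ℤ) {q : ℕ} (H : Fin q → Set (Fin 2 → ℤ)) : Prop :=
  IsHexagonalization Φ H ∧ (∀ i, 0 ≤ typeQ (H i)) ∧ ∃ i, 0 < typeQ (H i)


/-!
On the axis `x = (s, 0)` an assignment valuation represented by `(V, w, φ)` is the sum of the
`s` largest elements of the multiset in which each first weight `w(i,1)` occurs `φ(i)` times.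
These partial sums determine the multiset, so a representation `([3k], w, a)` of `f` has the
same multiset as `([k], w', φ')`, in which each `c ∈ [k]` occurs `T` times. Hence every
`w(i,1)` is some `c ∈ [k]`, the `a_i` with `w(i,1) = c` sum to `T`, and `T/4 < a_i < T/2`
leaves room for exactly three of them. Conversely, given the triplets, let item `i` carry the
weights of its triplet: assignments for `([3k], w, a)` aggregate over triplets, and assignments
for `([k], w', φ')` split among the members of each triplet, so both have the same values.
-/

namespace List

variable {α : Type*} [LinearOrder α] [AddCommMonoid α] [IsOrderedAddMonoid α]

theorem Sublist.sum_le_sum_take {l' l : List α} (hs : l' <+ l) (hl : l.Pairwise (· ≥ ·)) :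
    l'.sum ≤ (l.take l'.length).sum := by
  induction hs with
  | slnil => simp
  | @cons l₁ l₂ b h ih =>
    refine (ih hl.of_cons).trans ?_
    rcases hm : l₁.length with _ | m
    · simp
    · have hlen : m < l₂.length := by have := h.length_le; omega
      have hb : l₂[m] ≤ b := (pairwise_cons.mp hl).1 _ (getElem_mem hlen)
      rw [sum_take_succ _ _ hlen, take_succ_cons, sum_cons, add_comm]
      exact add_le_add hb le_rfl
  | cons_cons b h ih =>
    simpa using add_le_add_right (ih hl.of_cons) b

end List

namespace Multiset

section TopSum

variable {α : Type*} [LinearOrder α] [AddCommMonoid α]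

def topSum (M : Multiset α) (s : ℕ) : α := ((M.sort (· ≥ ·)).take s).sum

theorem isGreatest_topSum [IsOrderedAddMonoid α] (M : Multiset α) {s : ℕ} (hs : s ≤ card M) :
    IsGreatest {r | ∃ N ≤ M, card N = s ∧ N.sum = r} (M.topSum s) := by
  refine ⟨⟨(M.sort (· ≥ ·)).take s, ?_, by simp [hs], rfl⟩, ?_⟩
  · conv_rhs => rw [← M.sort_eq (· ≥ ·)]
    exact (List.take_sublist _ _).subperm
  · rintro r ⟨N, hNM, rfl, rfl⟩
    have hsub : (N.sort (· ≥ ·)).Sublist (M.sort (· ≥ ·)) :=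
      List.sublist_of_subperm_of_pairwise
        (by rwa [← coe_le, sort_eq, sort_eq]) (pairwise_sort _ _) (pairwise_sort _ _)
    have := hsub.sum_le_sum_take (pairwise_sort _ _)
    rwa [length_sort, ← sum_coe, sort_eq] at this

theorem eq_of_topSum_eq [IsLeftCancelAdd α] {M M' : Multiset α} (hcard : card M = card M')
    (h : ∀ s ≤ card M, M.topSum s = M'.topSum s) : M = M' := by
  rw [← M.sort_eq (· ≥ ·), ← M'.sort_eq (· ≥ ·)]
  congr 1
  refine List.ext_getElem (by simp [hcard]) fun i hi hi' => ?_
  have hi₀ : i + 1 ≤ card M := by simpa using hi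
  have hsucc := h (i + 1) hi₀
  rw [topSum, topSum, List.sum_take_succ _ _ hi, List.sum_take_succ _ _ hi'] at hsucc
  exact add_left_cancel (hsucc.trans (by rw [← topSum, ← topSum, h i (by omega)]))

end TopSum

theorem exists_le_and_sum_eq_of_le_sum {ι α : Type*} [DecidableEq α] (s : Finset ι)
    (g : ι → Multiset α) {N : Multiset α} (hN : N ≤ ∑ i ∈ s, g i) :
    ∃ F : ι → Multiset α, (∀ i, F i ≤ g i) ∧ ∑ i ∈ s, F i = N := by
  classical
  induction s using Finset.induction_on generalizing N with
  | empty => exact ⟨0, fun _ => zero_le _, by simp [le_zero.mp (by simpa using hN)]⟩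
  | @insert i s hi ih =>
    rw [sum_insert hi] at hN
    obtain ⟨F, hF, hFs⟩ := ih (N := N - g i) (by rwa [tsub_le_iff_left])
    refine ⟨Function.update F i (N ∩ g i), fun j => ?_, ?_⟩
    · rcases eq_or_ne j i with rfl | hj
      · simpa using inter_le_right
      · simpa [hj] using hF j
    · rw [sum_insert hi, Function.update_self, sum_update_of_notMem hi, hFs]
      ext x
      simp only [count_add, count_inter, count_sub]
      omega

end Multiset

section Splitting

variable {ι : Type*}

theorem exists_sum_eq_of_le_sum (s : Finset ι) {c : ι → ℤ} (hc : ∀ i ∈ s, 0 ≤ c i) {d : ℤ}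
    (hd : 0 ≤ d) (hds : d ≤ ∑ i ∈ s, c i) :
    ∃ u : ι → ℤ, (∀ i ∈ s, 0 ≤ u i ∧ u i ≤ c i) ∧ ∑ i ∈ s, u i = d := by
  classical
  induction s using Finset.induction_on generalizing d with
  | empty => exact ⟨0, by simp, by simp only [sum_empty, Pi.zero_apply] at hds ⊢; omega⟩
  | @insert i s hi ih =>
    have hci := hc i (mem_insert_self i s)
    have hcs : ∀ j ∈ s, 0 ≤ c j := fun j hj => hc j (mem_insert_of_mem hj)
    have hsum := sum_nonneg hcs
    rw [sum_insert hi] at hds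
    obtain ⟨u, hu, hus⟩ := ih hcs (d := d - min d (c i)) (by omega) (by omega)
    refine ⟨Function.update u i (min d (c i)), fun j hj => ?_, ?_⟩
    · rcases eq_or_ne j i with rfl | hji
      · rw [Function.update_self]
        omega
      · simpa [hji] using hu j ((mem_insert.1 hj).resolve_left hji)
    · rw [sum_insert hi, Function.update_self, sum_update_of_notMem hi, hus]
      omega

theorem exists_split_of_le_sum (s : Finset ι) {φ : ι → ℤ} (hφ : ∀ i ∈ s, 0 ≤ φ i)
    {z : Fin 2 → ℤ} (hz : ∀ j, 0 ≤ z j) (hzs : z 0 + z 1 ≤ ∑ i ∈ s, φ i) :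
    ∃ y : ι → Fin 2 → ℤ, (∀ i ∈ s, ∀ j, 0 ≤ y i j) ∧ (∀ j, ∑ i ∈ s, y i j = z j) ∧
      ∀ i ∈ s, y i 0 + y i 1 ≤ φ i := by
  obtain ⟨u, hu, hus⟩ := exists_sum_eq_of_le_sum s hφ (hz 0) (by linarith [hz 1])
  obtain ⟨v, hv, hvs⟩ := exists_sum_eq_of_le_sum s (c := fun i => φ i - u i)
    (fun i hi => by linarith [hu i hi]) (hz 1) (by rw [sum_sub_distrib, hus]; linarith)
  refine ⟨fun i => ![u i, v i], fun i hi j => ?_, fun j => ?_, fun i hi => ?_⟩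
  · fin_cases j
    exacts [(hu i hi).1, (hv i hi).1]
  · fin_cases j
    exacts [hus, hvs]
  · simp only [Matrix.cons_val_zero, Matrix.cons_val_one]
    linarith [(hv i hi).2]

end Splitting

section AssignmentValuation

variable {V W : Type} [Fintype V] [Fintype W] {Φ : ℤ} {f : (Fin 2 → ℤ) → ℝ}

def assignmentValue (w : V → Fin 2 → ℝ) (y : V → Fin 2 → ℤ) : ℝ :=
  ∑ i, (w i 0 * (y i 0 : ℝ) + w i 1 * (y i 1 : ℝ))

def assignmentValueSet (w : V → Fin 2 → ℝ) (φ : V → ℤ) (x : Fin 2 → ℤ) : Set ℝ :=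
  {r | ∃ y, FeasibleAssign φ x y ∧ r = assignmentValue w y}

theorem IsAssignmentValuation.isGreatest {w : V → Fin 2 → ℝ} {φ : V → ℤ}
    (hf : IsAssignmentValuation Φ f V w φ) {x : Fin 2 → ℤ} (hx : x ∈ TPhi Φ) :
    IsGreatest (assignmentValueSet w φ x) (f x) :=
  hf.2.2 x hx

section Aggregation

variable [DecidableEq W]

theorem assignmentValue_comp (π : V → W) (w : W → Fin 2 → ℝ) (y : V → Fin 2 → ℤ) :
    assignmentValue (fun i => w (π i)) y =
      assignmentValue w (fun c j => ∑ i with π i = c, y i j) := by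
  rw [assignmentValue, assignmentValue, ← sum_fiberwise univ π]
  refine sum_congr rfl fun c _ => ?_
  rw [sum_congr rfl fun i hi => by rw [(mem_filter.1 hi).2]]
  push_cast
  rw [sum_add_distrib, mul_sum, mul_sum]

theorem assignmentValueSet_comp (π : V → W) (w : W → Fin 2 → ℝ) {φ : V → ℤ}
    (hφ : ∀ i, 0 ≤ φ i) (x : Fin 2 → ℤ) :
    assignmentValueSet (fun i => w (π i)) φ x =
      assignmentValueSet w (fun c => ∑ i with π i = c, φ i) x := by
  ext r
  constructor
  · rintro ⟨y, ⟨hy, hyx, hyφ⟩, rfl⟩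
    refine ⟨fun c j => ∑ i with π i = c, y i j, ⟨fun c j => sum_nonneg fun i _ => hy i j,
      fun j => by rw [sum_fiberwise, hyx], fun c => ?_⟩, assignmentValue_comp π w y⟩
    rw [← sum_add_distrib]
    exact sum_le_sum fun i _ => hyφ i
  · rintro ⟨z, ⟨hz, hzx, hzψ⟩, rfl⟩
    choose Y hY₀ hYz hYφ using fun c =>
      exists_split_of_le_sum {i | π i = c} (fun i _ => hφ i) (hz c) (hzψ c)
    have hfiber : ∀ c j, ∑ i with π i = c, Y (π i) i j = z c j := fun c j => by
      rw [sum_congr rfl fun i hi => by rw [(mem_filter.1 hi).2], hYz]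
    refine ⟨fun i => Y (π i) i, ⟨fun i j => hY₀ _ i (by simp) j, fun j => ?_,
      fun i => hYφ _ i (by simp)⟩, ?_⟩
    · rw [← hzx, ← sum_fiberwise univ π]
      exact sum_congr rfl fun c _ => hfiber c j
    · rw [assignmentValue_comp π]
      simp only [hfiber]

theorem IsAssignmentValuation.comp {w : W → Fin 2 → ℝ} {ψ : W → ℤ}
    (hf : IsAssignmentValuation Φ f W w ψ) (π : V → W) {φ : V → ℤ}
    (hφ : ∀ i, 0 < φ i) (hψ : ∀ c, ∑ i with π i = c, φ i = ψ c) :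
    IsAssignmentValuation Φ f V (fun i => w (π i)) φ := by
  obtain rfl : ψ = fun c => ∑ i with π i = c, φ i := funext fun c => (hψ c).symm
  refine ⟨hφ, by rw [← hf.2.1, sum_fiberwise], fun x hx => ?_⟩
  change IsGreatest (assignmentValueSet (fun i => w (π i)) φ x) (f x)
  rw [assignmentValueSet_comp π w (fun i => (hφ i).le)]
  exact hf.isGreatest hx

end Aggregation

noncomputable def axisMultiset (w : V → Fin 2 → ℝ) (φ : V → ℤ) : Multiset ℝ :=
  ∑ i, Multiset.replicate (φ i).toNat (w i 0)

theorem card_axisMultiset (w : V → Fin 2 → ℝ) {φ : V → ℤ} (hφ : ∀ i, 0 ≤ φ i) :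
    (Multiset.card (axisMultiset w φ) : ℤ) = ∑ i, φ i := by
  simp [axisMultiset, Multiset.card_sum, Int.toNat_of_nonneg (hφ _)]

theorem mem_axisMultiset {w : V → Fin 2 → ℝ} {φ : V → ℤ} {r : ℝ} :
    r ∈ axisMultiset w φ ↔ ∃ i, 0 < φ i ∧ r = w i 0 := by
  simp [axisMultiset, Multiset.mem_sum, Multiset.mem_replicate]

theorem count_axisMultiset (w : V → Fin 2 → ℝ) (φ : V → ℤ) (r : ℝ) :
    (axisMultiset w φ).count r = ∑ i with w i 0 = r, (φ i).toNat := by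
  simp [axisMultiset, Multiset.count_sum', Multiset.count_replicate, sum_ite]

theorem assignmentValueSet_axis (w : V → Fin 2 → ℝ) {φ : V → ℤ} (hφ : ∀ i, 0 ≤ φ i) (s : ℕ) :
    assignmentValueSet w φ ![(s : ℤ), 0] =
      {r | ∃ N ≤ axisMultiset w φ, Multiset.card N = s ∧ N.sum = r} := by
  ext r
  constructor
  · rintro ⟨y, ⟨hy, hyx, hyφ⟩, rfl⟩
    have hy₁ : ∀ i, y i 1 = 0 := fun i =>
      (sum_eq_zero_iff_of_nonneg fun i _ => hy i 1).1 (by simpa using hyx 1) i (mem_univ i)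
    have hy₀ : ∀ i, ((y i 0).toNat : ℤ) = y i 0 := fun i => Int.toNat_of_nonneg (hy i 0)
    refine ⟨∑ i, Multiset.replicate (y i 0).toNat (w i 0), sum_le_sum fun i _ => ?_, ?_, ?_⟩
    · exact Multiset.replicate_mono _ (by have := hyφ i; have := hy i 1; omega)
    · zify
      simpa [Multiset.card_sum, hy₀] using hyx 0
    · simp only [assignmentValue, Multiset.sum_sum, Multiset.sum_replicate, nsmul_eq_mul, hy₁]
      refine sum_congr rfl fun i _ => ?_
      rw [← Int.cast_natCast, hy₀]
      ring
  · rintro ⟨N, hN, hNs, rfl⟩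
    obtain ⟨F, hF, rfl⟩ := Multiset.exists_le_and_sum_eq_of_le_sum univ _ hN
    choose m hm hFm using fun i => Multiset.le_replicate_iff.1 (hF i)
    refine ⟨fun i => ![(m i : ℤ), 0], ⟨fun i j => by fin_cases j <;> simp, fun j => ?_,
      fun i => ?_⟩, ?_⟩
    · fin_cases j
      · simpa [Multiset.card_sum, hFm] using congrArg (Nat.cast : ℕ → ℤ) hNs
      · simp
    · have := hm i
      have := hφ i
      simp only [Matrix.cons_val_zero, Matrix.cons_val_one, add_zero]
      omega
    · simp [assignmentValue, Multiset.sum_sum, hFm, mul_comm]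

theorem IsAssignmentValuation.apply_axis_eq_topSum {w : V → Fin 2 → ℝ} {φ : V → ℤ}
    (hf : IsAssignmentValuation Φ f V w φ) {s : ℕ} (hs : (s : ℤ) ≤ Φ) :
    f ![(s : ℤ), 0] = (axisMultiset w φ).topSum s := by
  have hx : ![(s : ℤ), 0] ∈ TPhi Φ := by simpa [TPhi] using hs
  have hcard := card_axisMultiset w fun i => (hf.1 i).le
  rw [hf.2.1] at hcard
  have := hf.isGreatest hx
  rw [assignmentValueSet_axis w (fun i => (hf.1 i).le)] at this
  exact this.unique (Multiset.isGreatest_topSum _ (by omega))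

theorem IsAssignmentValuation.axisMultiset_eq {w : V → Fin 2 → ℝ} {φ : V → ℤ}
    {w' : W → Fin 2 → ℝ} {φ' : W → ℤ} (hf : IsAssignmentValuation Φ f V w φ)
    (hf' : IsAssignmentValuation Φ f W w' φ') : axisMultiset w φ = axisMultiset w' φ' := by
  have hcard := card_axisMultiset w fun i => (hf.1 i).le
  have hcard' := card_axisMultiset w' fun i => (hf'.1 i).le
  rw [hf.2.1] at hcard
  rw [hf'.2.1] at hcard'
  refine Multiset.eq_of_topSum_eq (by omega) fun s hs => ?_
  rw [← hf.apply_axis_eq_topSum (by omega), ← hf'.apply_axis_eq_topSum (by omega)]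

theorem IsAssignmentValuation.exists_fiber_sum_eq {k : ℕ} {T : ℤ}
    (hf : IsAssignmentValuation Φ f (Fin k) (fun c _ => ((c : ℕ) : ℝ) + 1) (fun _ => T))
    {w : V → Fin 2 → ℝ} {φ : V → ℤ} (hw : IsAssignmentValuation Φ f V w φ) :
    ∃ π : V → Fin k, ∀ c, ∑ i with π i = c, φ i = T := by
  have hM := hw.axisMultiset_eq hf
  have hval : ∀ i, ∃ c : Fin k, w i 0 = (c : ℕ) + 1 := fun i => by
    obtain ⟨c, -, hc⟩ := mem_axisMultiset.1 (hM ▸ mem_axisMultiset.2 ⟨i, hw.1 i, rfl⟩)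
    exact ⟨c, hc⟩
  choose π hπ using hval
  refine ⟨π, fun c => ?_⟩
  have hcount := congrArg (Multiset.count (((c : ℕ) : ℝ) + 1)) hM
  simp only [count_axisMultiset, hπ, add_left_inj, Nat.cast_inj, Fin.val_inj, filter_eq',
    mem_univ, if_true, sum_singleton] at hcount
  have hT : 0 < T := hf.1 c
  rw [← Int.toNat_of_nonneg hT.le, ← hcount]
  push_cast
  exact sum_congr rfl fun i _ => (Int.toNat_of_nonneg (hw.1 i).le).symm

end AssignmentValuation

theorem card_eq_three_of_sum_eq {ι : Type*} {s : Finset ι} {a : ι → ℤ} {T : ℤ}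
    (hsum : ∑ i ∈ s, a i = T) (hT : 0 < T) (ha : ∀ i ∈ s, T < 4 * a i ∧ 2 * a i < T) :
    s.card = 3 := by
  have hlow : ∑ i ∈ s, 2 * a i ≤ ∑ i ∈ s, (T - 1) :=
    sum_le_sum fun i hi => by linarith [(ha i hi).2]
  have hup : ∑ i ∈ s, (T + 1) ≤ ∑ i ∈ s, 4 * a i :=
    sum_le_sum fun i hi => by linarith [(ha i hi).1]
  rw [← mul_sum, hsum, sum_const, nsmul_eq_mul] at hlow hup
  have h₃ : 2 < (s.card : ℤ) := by nlinarith
  have h₄ : (s.card : ℤ) < 4 := by nlinarith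
  omega

theorem stmt13_general (k : ℕ) (a : Fin (3 * k) → ℤ)
    (T : ℤ)
    (hbound : ∀ i, T < 4 * a i ∧ 2 * a i < T)
    (Φ : ℤ)
    (f : (Fin 2 → ℤ) → ℝ)
    (hf : IsAssignmentValuation Φ f (Fin k)
      (fun i _ => ((i : ℕ) : ℝ) + 1) (fun _ => T)) :
    (∃ w : Fin (3 * k) → Fin 2 → ℝ,
        IsAssignmentValuation Φ f (Fin (3 * k)) w (fun i => a i)) ↔
    (∃ π : Fin (3 * k) → Fin k, ∀ c : Fin k,
        (Finset.univ.filter (fun i => π i = c)).card = 3 ∧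
        ∑ i ∈ Finset.univ.filter (fun i => π i = c), a i = T) := by
  constructor
  · rintro ⟨w, hw⟩
    obtain ⟨π, hπ⟩ := hf.exists_fiber_sum_eq hw
    exact ⟨π, fun c => ⟨card_eq_three_of_sum_eq (hπ c) (hf.1 c) fun i _ => hbound i, hπ c⟩⟩
  · rintro ⟨π, hπ⟩
    exact ⟨_, hf.comp π (fun i => by linarith [hbound i]) fun c => (hπ c).2⟩

theorem stmt13 (k : ℕ) (hk : 0 < k) (a : Fin (3 * k) → ℤ) (ha : ∀ i, 0 < a i)
    (T : ℤ) (hT : (k : ℤ) * T = ∑ i, a i)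
    (hbound : ∀ i, T < 4 * a i ∧ 2 * a i < T)
    (Φ : ℤ) (hΦ : Φ = ∑ i, a i)
    (f : (Fin 2 → ℤ) → ℝ)
    (hf : IsAssignmentValuation Φ f (Fin k)
      (fun i _ => ((i : ℕ) : ℝ) + 1) (fun _ => T)) :
    (∃ w : Fin (3 * k) → Fin 2 → ℝ,
        IsAssignmentValuation Φ f (Fin (3 * k)) w (fun i => a i)) ↔
    (∃ π : Fin (3 * k) → Fin k, ∀ c : Fin k,
        (Finset.univ.filter (fun i => π i = c)).card = 3 ∧
        ∑ i ∈ Finset.univ.filter (fun i => π i = c), a i = T) :=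
  stmt13_general k a T hbound Φ f hf
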